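/- arXiv:math/0509447 — 7 statements merged into one kernel-verified Lean document; each statement's English description precedes it below -/
import Mathlib

section
/- Let G be a finite group and let H ≤ M ≤ G be subgroups. If H is nc-supplemented in G, then H is nc-supplemented in M. -/
open scoped Pointwise MatrixGroups

/-- `H` is *nc-supplemented* in its ambient group `G` if there is a subgroup `K ≤ G`
such that the set product `H * K` is a normal subgroup of `G` and
`H ⊓ K` is contained in the normal core of `H` in `G`. -/
def IsNCSupplementedIn {G : Type*} [Group G] (H : Subgroup G) : Prop :=
  ∃ K L : Subgroup G, L.Normal ∧ (L : Set G) = (H : Set G) * (K : Set G) ∧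
    H ⊓ K ≤ H.normalCore

namespace Subgroup

variable {G : Type*} [Group G]

theorem normalCore_subgroupOf_le (H M : Subgroup G) :
    H.normalCore.subgroupOf M ≤ (H.subgroupOf M).normalCore :=
  have := H.normalCore_normal.subgroupOf M
  normal_le_normalCore.mpr (comap_mono H.normalCore_le)

theorem coe_subgroupOf_mul_coe_subgroupOf {H M : Subgroup G} (hHM : H ≤ M) (K : Subgroup G) :
    (H.subgroupOf M : Set M) * K.subgroupOf M = M.subtype ⁻¹' (H * K) := by
  ext x
  constructor
  · rintro ⟨a, ha, b, hb, rfl⟩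
    exact ⟨a, ha, b, hb, rfl⟩
  · rintro ⟨a, ha, b, hb, hab⟩
    have hbM : b ∈ M := by
      rw [eq_inv_mul_of_mul_eq hab]
      exact M.mul_mem (M.inv_mem (hHM ha)) x.2
    exact ⟨⟨a, hHM ha⟩, ha, ⟨b, hbM⟩, hb, Subtype.ext hab⟩

end Subgroup

theorem isNCSupplementedIn_of_le_general
    {G : Type*} [Group G] (H M : Subgroup G) (hHM : H ≤ M)
    (h : IsNCSupplementedIn H) :
    IsNCSupplementedIn (H.subgroupOf M) := by
  obtain ⟨K, L, hL, hLHK, hcore⟩ := h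
  refine ⟨K.subgroupOf M, L.subgroupOf M, hL.subgroupOf M, ?_, ?_⟩
  · rw [Subgroup.coe_subgroupOf_mul_coe_subgroupOf hHM, Subgroup.coe_subgroupOf, hLHK]
  · exact (Subgroup.comap_inf H K M.subtype).symm.le.trans
      ((Subgroup.comap_mono hcore).trans (H.normalCore_subgroupOf_le M))

/-- If `H ≤ M ≤ G` and `H` is nc-supplemented in `G`, then `H` is nc-supplemented in `M`. -/
theorem isNCSupplementedIn_of_le
    {G : Type*} [Group G] [Finite G] (H M : Subgroup G) (hHM : H ≤ M)
    (h : IsNCSupplementedIn H) :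
    IsNCSupplementedIn (H.subgroupOf M) :=
  isNCSupplementedIn_of_le_general H M hHM h
end

section
/- Let G be a finite group, H a subgroup of G, and N a normal subgroup of G with N ≤ H. If H is nc-supplemented in G, then H/N is nc-supplemented in G/N. -/
open scoped Pointwise MatrixGroups

namespace Subgroup

variable {G Q : Type*} [Group G] [Group Q]

theorem map_inf_eq_of_ker_le (f : G →* Q) {H : Subgroup G} (K : Subgroup G) (hker : f.ker ≤ H) :
    (H ⊓ K).map f = H.map f ⊓ K.map f := by
  refine le_antisymm (map_inf_le H K f) ?_
  rintro _ ⟨hH, k, hk, rfl⟩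
  exact ⟨k, ⟨(comap_map_eq_self hker).le hH, hk⟩, rfl⟩

theorem map_normalCore_le_normalCore_map {f : G →* Q} (hf : Function.Surjective f)
    (H : Subgroup G) : H.normalCore.map f ≤ (H.map f).normalCore := by
  have : (H.normalCore.map f).Normal := H.normalCore_normal.map f hf
  exact normal_le_normalCore.mpr (map_mono H.normalCore_le)

end Subgroup

theorem IsNCSupplementedIn.map {G Q : Type*} [Group G] [Group Q] {H : Subgroup G}
    (h : IsNCSupplementedIn H) {f : G →* Q} (hf : Function.Surjective f) (hker : f.ker ≤ H) :
    IsNCSupplementedIn (H.map f) := by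
  obtain ⟨K, L, hLnormal, hL, hHK⟩ := h
  refine ⟨K.map f, L.map f, hLnormal.map f hf, ?_, ?_⟩
  · simp only [Subgroup.coe_map, hL, Set.image_mul]
  · calc H.map f ⊓ K.map f = (H ⊓ K).map f := (Subgroup.map_inf_eq_of_ker_le f K hker).symm
      _ ≤ H.normalCore.map f := Subgroup.map_mono hHK
      _ ≤ (H.map f).normalCore := Subgroup.map_normalCore_le_normalCore_map hf H

theorem isNCSupplementedIn_quotient_of_le_general
    {G : Type*} [Group G] (H N : Subgroup G) [N.Normal] (hNH : N ≤ H)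
    (h : IsNCSupplementedIn H) :
    IsNCSupplementedIn (H.map (QuotientGroup.mk' N)) :=
  h.map (QuotientGroup.mk'_surjective N) (by rwa [QuotientGroup.ker_mk'])

/-- If `N ⊴ G`, `N ≤ H` and `H` is nc-supplemented in `G`, then `H/N` is
nc-supplemented in `G/N`. -/
theorem isNCSupplementedIn_quotient_of_le
    {G : Type*} [Group G] [Finite G] (H N : Subgroup G) [N.Normal] (hNH : N ≤ H)
    (h : IsNCSupplementedIn H) :
    IsNCSupplementedIn (H.map (QuotientGroup.mk' N)) :=
  isNCSupplementedIn_quotient_of_le_general H N hNH h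
end

section
/- Let G be a finite group, H a subgroup of G, and N a normal subgroup of G with gcd(|N|, |H|) = 1. If H is nc-supplemented in G, then HN/N is nc-supplemented in G/N. -/
open scoped Pointwise MatrixGroups

/-! Let `L = HK` be normal with `H ∩ K ≤ H_G`. Since `M := L ∩ N` is normal, `MK` is a subgroup
between `K` and `L`, and `[MK : K] = [M : M ∩ K]` divides `|N|` while `[L : K] = [H : H ∩ K]`
divides `|H|`; coprimality forces `M ≤ K`. Hence if `aN = bN` with `a ∈ H`, `b ∈ K`, then
`b⁻¹a ∈ M ≤ K`, so `a ∈ H ∩ K ≤ H_G`: the images `KN/N` and `LN/N` witness the claim. -/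

namespace Subgroup

variable {G G' : Type*} [Group G] [Group G']

theorem relIndex_eq_of_coe_eq_mul {H K L : Subgroup G} (hL : (L : Set G) = H * K) :
    K.relIndex L = K.relIndex H := by
  have hHL : H ≤ L := SetLike.coe_subset_coe.mp (hL ▸ Set.subset_mul_left _ K.one_mem)
  let e := quotientSubgroupOfEmbeddingOfLE K hHL
  have he : Function.Surjective e := by
    rintro ⟨l, hl⟩
    rw [← SetLike.mem_coe, hL] at hl
    obtain ⟨h, hh, k, hk, rfl⟩ := hl
    refine ⟨QuotientGroup.mk ⟨h, hh⟩, QuotientGroup.eq.mpr ?_⟩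
    simpa [mem_subgroupOf] using hk
  exact (Nat.card_congr (Equiv.ofBijective e ⟨e.injective, he⟩)).symm

theorem le_of_coe_eq_mul_of_coprime {H K L M : Subgroup G} [M.Normal]
    (hL : (L : Set G) = H * K) (hML : M ≤ L) (hcop : (Nat.card M).Coprime (Nat.card H)) :
    M ≤ K := by
  have hKL : K ≤ L := SetLike.coe_subset_coe.mp (hL ▸ Set.subset_mul_right _ H.one_mem)
  have hdvd : K.relIndex M ∣ Nat.card H :=
    calc K.relIndex M = K.relIndex (M ⊔ K) := (relIndex_eq_of_coe_eq_mul (normal_mul M K)).symm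
      _ ∣ K.relIndex L :=
        Dvd.intro _ (relIndex_mul_relIndex K (M ⊔ K) L le_sup_right (sup_le hML hKL))
      _ = K.relIndex H := relIndex_eq_of_coe_eq_mul hL
      _ ∣ Nat.card H := relIndex_dvd_card K H
  exact relIndex_eq_one.mp (Nat.eq_one_of_dvd_coprimes hcop (relIndex_dvd_card K M) hdvd)

theorem map_inf_map_le_map_inf {f : G →* G'} {H K : Subgroup G} (hker : f.ker ⊓ (H ⊔ K) ≤ K) :
    H.map f ⊓ K.map f ≤ (H ⊓ K).map f := by
  rintro _ ⟨⟨a, ha, rfl⟩, ⟨b, hb, hab⟩⟩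
  have hba : b⁻¹ * a ∈ K :=
    hker ⟨by simp [hab], mul_mem (mem_sup_right (inv_mem hb)) (mem_sup_left ha)⟩
  exact ⟨a, ⟨ha, by simpa using mul_mem hb hba⟩, rfl⟩

theorem map_normalCore_le {f : G →* G'} (hf : Function.Surjective f) (H : Subgroup G) :
    H.normalCore.map f ≤ (H.map f).normalCore :=
  have := H.normalCore_normal.map f hf
  normal_le_normalCore.mpr (map_mono H.normalCore_le)

end Subgroup

open Subgroup in
theorem isNCSupplementedIn_quotient_of_coprime_general
    {G : Type*} [Group G] (H N : Subgroup G) [N.Normal]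
    (hcop : Nat.Coprime (Nat.card N) (Nat.card H))
    (h : IsNCSupplementedIn H) :
    IsNCSupplementedIn (H.map (QuotientGroup.mk' N)) := by
  obtain ⟨K, L, hL, hLHK, hcore⟩ := h
  have hsurj := QuotientGroup.mk'_surjective N
  have hHKL : H ⊔ K ≤ L := sup_le
    (SetLike.coe_subset_coe.mp (hLHK ▸ Set.subset_mul_left _ K.one_mem))
    (SetLike.coe_subset_coe.mp (hLHK ▸ Set.subset_mul_right _ H.one_mem))
  have hNK : L ⊓ N ≤ K := le_of_coe_eq_mul_of_coprime hLHK inf_le_left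
    (hcop.coprime_dvd_left (card_dvd_of_le inf_le_right))
  refine ⟨K.map (QuotientGroup.mk' N), L.map (QuotientGroup.mk' N), hL.map _ hsurj,
    by rw [coe_map, coe_map, coe_map, hLHK, Set.image_mul], ?_⟩
  calc H.map (QuotientGroup.mk' N) ⊓ K.map (QuotientGroup.mk' N)
      ≤ (H ⊓ K).map (QuotientGroup.mk' N) := map_inf_map_le_map_inf <| by
        rw [QuotientGroup.ker_mk', inf_comm]
        exact (inf_le_inf_right N hHKL).trans hNK
    _ ≤ H.normalCore.map (QuotientGroup.mk' N) := map_mono hcore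
    _ ≤ _ := map_normalCore_le hsurj H

/-- If `N ⊴ G`, `gcd(|N|, |H|) = 1` and `H` is nc-supplemented in `G`, then `HN/N` is
nc-supplemented in `G/N`. -/
theorem isNCSupplementedIn_quotient_of_coprime
    {G : Type*} [Group G] [Finite G] (H N : Subgroup G) [N.Normal]
    (hcop : Nat.Coprime (Nat.card N) (Nat.card H))
    (h : IsNCSupplementedIn H) :
    IsNCSupplementedIn (H.map (QuotientGroup.mk' N)) :=
  isNCSupplementedIn_quotient_of_coprime_general H N hcop h
end

section
/- Let G be a finite group and H a maximal subgroup of G. If H is nc-supplemented in G, then H is c-supplemented in G. -/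
open scoped Pointwise MatrixGroups

/-- `H` is *c-supplemented* in its ambient group `G` if there is a subgroup `K ≤ G`
such that `H * K = G` and `H ⊓ K` is contained in the normal core of `H` in `G`. -/
def IsCSupplementedIn {G : Type*} [Group G] (H : Subgroup G) : Prop :=
  ∃ K : Subgroup G, (H : Set G) * (K : Set G) = Set.univ ∧ H ⊓ K ≤ H.normalCore

namespace Subgroup

variable {G : Type*} [Group G]

theorem le_of_coe_eq_mul {H K L : Subgroup G} (hL : (L : Set G) = (H : Set G) * (K : Set G)) :
    H ≤ L := by
  intro x hx
  rw [← SetLike.mem_coe, hL]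
  exact Set.subset_mul_left _ K.one_mem hx

theorem Normal.isCSupplementedIn {H : Subgroup G} (hH : H.Normal) : IsCSupplementedIn H :=
  ⟨⊤, by rw [coe_top, Set.mul_univ ⟨1, H.one_mem⟩], by rw [inf_top_eq, normalCore_eq_self]⟩

end Subgroup

theorem isCSupplementedIn_of_isNCSupplementedIn_of_maximal_general
    {G : Type*} [Group G] (H : Subgroup G) (hmax : IsCoatom H)
    (h : IsNCSupplementedIn H) :
    IsCSupplementedIn H := by
  obtain ⟨K, L, hLn, hLK, hHK⟩ := h
  rcases hmax.le_iff.mp (Subgroup.le_of_coe_eq_mul hLK) with hL | hL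
  · exact ⟨K, by rw [← hLK, hL, Subgroup.coe_top], hHK⟩
  · exact (hL ▸ hLn).isCSupplementedIn

/-- In a finite group, every nc-supplemented maximal subgroup is c-supplemented. -/
theorem isCSupplementedIn_of_isNCSupplementedIn_of_maximal
    {G : Type*} [Group G] [Finite G] (H : Subgroup G) (hmax : IsCoatom H)
    (h : IsNCSupplementedIn H) :
    IsCSupplementedIn H :=
  isCSupplementedIn_of_isNCSupplementedIn_of_maximal_general H hmax h
end

section
/- In the alternating group A₄ on 4 letters, the subgroup C generated by the double transposition (1 2)(3 4) is nc-supplemented in A₄ but is not c-supplemented in A₄. -/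
/-! Points are numbered `0, …, 3`, so `x = (0 1)(2 3)` below is the paper's `(1 2)(3 4)`; let
`H = ⟨x⟩`. The involution `y = (0 2)(1 3)` commutes with `x`, so `H⟨y⟩ = H ⊔ ⟨y⟩` is the Klein
four-group, which is normal in `A₄`, and `H ∩ ⟨y⟩ = 1`.

Conversely, if `HK = A₄`, then `K` has index at most `2` and hence contains every square. Since
`x` is a product of two squares of `3`-cycles, `x ∈ H ∩ K`; but `x` is not in the normal core of
`H`, as conjugating it by a `3`-cycle leaves `H`. -/

open scoped Pointwise MatrixGroups

open Subgroup Equiv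

section

variable {G : Type*} [Group G]

theorem IsNCSupplementedIn.of_le_normalizer {H K : Subgroup G} (hHK : H ≤ normalizer (K : Set G))
    (hnormal : (H ⊔ K).Normal) (hinf : H ⊓ K ≤ H.normalCore) : IsNCSupplementedIn H :=
  ⟨K, H ⊔ K, hnormal, coe_mul_of_left_le_normalizer_right H K hHK, hinf⟩

theorem mem_zpowers_iff_of_sq_eq_one {g x : G} (hg : g ^ 2 = 1) :
    x ∈ zpowers g ↔ x = 1 ∨ x = g := by
  refine ⟨?_, ?_⟩
  · rw [mem_zpowers_iff]
    rintro ⟨n, rfl⟩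
    rw [zpow_eq_zpow_emod' n hg]
    rcases Int.emod_two_eq n with h | h <;> simp [h]
  · rintro (rfl | rfl)
    exacts [one_mem _, mem_zpowers _]

theorem zpowers_le_centralizer_of_commute {g h : G} (hgh : Commute g h) :
    zpowers g ≤ centralizer (zpowers h : Set G) :=
  zpowers_le.2 <| mem_centralizer_iff.2 fun _ hm => by
    obtain ⟨n, rfl⟩ := mem_zpowers_iff.1 hm
    exact (hgh.zpow_right n).eq.symm

theorem sq_mem_of_zpowers_mul_eq_univ {g : G} (hg : g ^ 2 = 1) {K : Subgroup G}
    (hK : (zpowers g : Set G) * (K : Set G) = Set.univ) (a : G) : a ^ 2 ∈ K := by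
  have hcoset : ∀ b, b ∈ K ∨ g⁻¹ * b ∈ K := fun b => by
    obtain ⟨c, hc, k, hk, rfl⟩ : b ∈ (zpowers g : Set G) * K := hK ▸ Set.mem_univ b
    rcases (mem_zpowers_iff_of_sq_eq_one hg).1 hc with rfl | rfl
    · exact .inl (by simpa using hk)
    · exact .inr (by simpa using hk)
  rcases hcoset a with ha | ha
  · exact pow_mem ha 2
  rcases hcoset (a ^ 2) with ha2 | ha2
  · exact ha2
  · have hmul : a = (g⁻¹ * a)⁻¹ * (g⁻¹ * a ^ 2) := by group
    rw [hmul]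
    exact pow_mem (mul_mem (inv_mem ha) ha2) 2

end

namespace A4

def x : alternatingGroup (Fin 4) :=
  ⟨swap 0 1 * swap 2 3, Perm.mem_alternatingGroup.2 (by decide)⟩

def y : alternatingGroup (Fin 4) :=
  ⟨swap 0 2 * swap 1 3, Perm.mem_alternatingGroup.2 (by decide)⟩

def r : alternatingGroup (Fin 4) :=
  ⟨swap 0 2 * swap 0 1, Perm.mem_alternatingGroup.2 (by decide)⟩

def s : alternatingGroup (Fin 4) :=
  ⟨swap 0 2 * swap 0 3, Perm.mem_alternatingGroup.2 (by decide)⟩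

theorem x_sq : x ^ 2 = 1 := by decide

theorem y_sq : y ^ 2 = 1 := by decide

theorem commute_x_y : Commute x y := (by decide : x * y = y * x)

theorem x_eq_sq_mul_sq : x = r ^ 2 * s ^ 2 := by decide

theorem zpowers_x_inf_zpowers_y : zpowers x ⊓ zpowers y = ⊥ := by
  refine eq_bot_iff.2 fun g ⟨hx, hy⟩ => ?_
  rcases (mem_zpowers_iff_of_sq_eq_one x_sq).1 hx with rfl | rfl
  · exact one_mem _
  · rcases (mem_zpowers_iff_of_sq_eq_one y_sq).1 hy with h | h <;> exact absurd h (by decide)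

theorem eq_x_or_y_or_mul_of_cycleType_eq (g : alternatingGroup (Fin 4))
    (hg : (g : Perm (Fin 4)).cycleType = {2, 2}) : g = x ∨ g = y ∨ g = x * y := by
  revert g; decide

theorem zpowers_x_sup_zpowers_y : zpowers x ⊔ zpowers y = alternatingGroup.kleinFour (Fin 4) := by
  refine le_antisymm (sup_le (zpowers_le.2 (subset_closure (by decide)))
    (zpowers_le.2 (subset_closure (by decide)))) (closure_le _ |>.2 fun g hg => ?_)
  rcases eq_x_or_y_or_mul_of_cycleType_eq g hg with rfl | rfl | rfl
  · exact mem_sup_left (mem_zpowers _)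
  · exact mem_sup_right (mem_zpowers _)
  · exact mul_mem (mem_sup_left (mem_zpowers _)) (mem_sup_right (mem_zpowers _))

theorem x_notMem_normalCore : x ∉ (zpowers x).normalCore := fun hx => by
  have hconj : ¬ (r * x * r⁻¹ = 1 ∨ r * x * r⁻¹ = x) := by decide
  exact hconj ((mem_zpowers_iff_of_sq_eq_one x_sq).1 (hx r))

theorem isNCSupplementedIn_zpowers_x : IsNCSupplementedIn (zpowers x) :=
  .of_le_normalizer
    ((zpowers_le_centralizer_of_commute commute_x_y).trans (centralizer_le_normalizer _))
    (zpowers_x_sup_zpowers_y ▸ alternatingGroup.normal_kleinFour (by simp))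
    (zpowers_x_inf_zpowers_y ▸ bot_le)

theorem not_isCSupplementedIn_zpowers_x : ¬ IsCSupplementedIn (zpowers x) := by
  rintro ⟨K, hK, hcore⟩
  have hxK : x ∈ K := x_eq_sq_mul_sq ▸
    mul_mem (sq_mem_of_zpowers_mul_eq_univ x_sq hK r) (sq_mem_of_zpowers_mul_eq_univ x_sq hK s)
  exact x_notMem_normalCore (hcore ⟨mem_zpowers x, hxK⟩)

end A4

/-- In `A₄`, the subgroup generated by `(1 2)(3 4)` is nc-supplemented but not
c-supplemented. -/
theorem a4_example :
    IsNCSupplementedIn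
      (Subgroup.zpowers (⟨Equiv.swap (0 : Fin 4) 1 * Equiv.swap 2 3,
        by rw [Equiv.Perm.mem_alternatingGroup]; decide⟩ : alternatingGroup (Fin 4))) ∧
    ¬ IsCSupplementedIn
      (Subgroup.zpowers (⟨Equiv.swap (0 : Fin 4) 1 * Equiv.swap 2 3,
        by rw [Equiv.Perm.mem_alternatingGroup]; decide⟩ : alternatingGroup (Fin 4))) :=
  ⟨A4.isNCSupplementedIn_zpowers_x, A4.not_isCSupplementedIn_zpowers_x⟩
end

section
/- Let G be a finite group, p a prime, P a Sylow p-subgroup of G that is nc-supplemented in G, and N a normal subgroup of G. Then PN/N is nc-supplemented in G/N. -/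
open scoped Pointwise MatrixGroups

namespace Subgroup

variable {G : Type*} [Group G]

theorem relIndex_eq_ncard_image (H K : Subgroup G) :
    H.relIndex K = ((K : Set G).image ((↑) : G → G ⧸ H)).ncard := by
  have hsmul : ∀ k : K, k • ((1 : G) : G ⧸ H) = ((k : G) : G ⧸ H) := fun k => by
    show (((k : G) * 1 : G) : G ⧸ H) = _
    rw [mul_one]
  have hstab : MulAction.stabilizer K ((1 : G) : G ⧸ H) = H.subgroupOf K := by
    ext k
    rw [MulAction.mem_stabilizer_iff, hsmul, QuotientGroup.eq, mul_one, inv_mem_iff,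
      mem_subgroupOf]
  rw [relIndex, ← hstab, MulAction.index_stabilizer]
  congr 1
  ext q
  constructor
  · rintro ⟨k, rfl⟩
    exact ⟨k, k.2, (hsmul k).symm⟩
  · rintro ⟨g, hg, rfl⟩
    exact ⟨⟨g, hg⟩, hsmul _⟩

theorem relIndex_eq_relIndex_of_coe_eq_mul {H K L : Subgroup G}
    (hL : (L : Set G) = H * K) : H.relIndex K = H.relIndex L := by
  have hL' : (L : Set G) = K * H := by
    rw [← inv_coe_set (H := L), hL, mul_inv_rev, inv_coe_set, inv_coe_set]
  rw [relIndex_eq_ncard_image, relIndex_eq_ncard_image, hL']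
  congr 1
  ext q
  constructor
  · rintro ⟨k, hk, rfl⟩
    exact ⟨k, ⟨k, hk, 1, H.one_mem, mul_one k⟩, rfl⟩
  · rintro ⟨_, ⟨k, hk, h, hh, rfl⟩, rfl⟩
    exact ⟨k, hk, (QuotientGroup.mk_mul_of_mem k hh).symm⟩

theorem le_of_isPGroup_of_not_dvd_relIndex {p : ℕ} [Fact p.Prime] {Q H M : Subgroup G}
    [M.Normal] (hQ : IsPGroup p Q) (hQH : Q ≤ H) (hMH : ¬ p ∣ M.relIndex H) : Q ≤ M := by
  have hdvd : M.relIndex Q ∣ M.relIndex H := by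
    rw [← relIndex_subgroupOf hQH]
    exact relIndex_dvd_index_of_normal _ _
  refine relIndex_eq_one.mp ((hQ.to_quotient (M.subgroupOf Q)).card_eq_or_dvd.resolve_right ?_)
  exact fun hp => hMH (hp.trans hdvd)

theorem map_inf_map_le_normalCore_map {G' : Type*} [Group G'] {f : G →* G'}
    (hf : Function.Surjective f) {H K : Subgroup G}
    (h : H ⊓ (K ⊔ f.ker) ≤ H.normalCore ⊔ f.ker) :
    H.map f ⊓ K.map f ≤ (H.map f).normalCore := by
  rintro _ ⟨⟨a, ha, rfl⟩, haK⟩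
  have haK' : a ∈ K ⊔ f.ker := by rw [← comap_map_eq]; exact haK
  have hcore : H.normalCore.map f ≤ (H.map f).normalCore :=
    have : (H.normalCore.map f).Normal := H.normalCore_normal.map f hf
    normal_le_normalCore.mpr (map_mono H.normalCore_le)
  exact hcore (map_le_map_iff.mpr h (mem_map_of_mem f ⟨ha, haK'⟩))

end Subgroup

theorem Sylow.inf_sup_le_normalCore_sup {G : Type*} [Group G] {p : ℕ} [Fact p.Prime]
    (P : Sylow p G) [(P : Subgroup G).FiniteIndex] {K L : Subgroup G}
    (hL : (L : Set G) = (P : Subgroup G) * K) (hPK : (P : Subgroup G) ⊓ K ≤ P.normalCore)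
    (N : Subgroup G) [N.Normal] :
    (P : Subgroup G) ⊓ (K ⊔ N) ≤ P.normalCore ⊔ N := by
  set M := (P : Subgroup G).normalCore ⊔ N
  have hPL : (P : Subgroup G) ≤ L := fun x hx => by
    rw [← SetLike.mem_coe, hL]
    exact ⟨x, hx, 1, K.one_mem, mul_one x⟩
  have hPK_index : ¬ p ∣ (P : Subgroup G).relIndex K := by
    rw [Subgroup.relIndex_eq_relIndex_of_coe_eq_mul hL]
    exact fun hp => P.not_dvd_index (hp.trans (Subgroup.relIndex_dvd_index_of_le hPL))
  have hMK_index : ¬ p ∣ M.relIndex (K ⊔ M) := by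
    rw [Subgroup.relIndex_sup_right]
    refine fun hp => hPK_index ?_
    rw [← Subgroup.inf_relIndex_right]
    exact hp.trans (Subgroup.relIndex_dvd_of_le_left K (hPK.trans le_sup_left))
  exact Subgroup.le_of_isPGroup_of_not_dvd_relIndex (P.isPGroup'.to_le inf_le_left)
    (inf_le_right.trans (sup_le_sup_left le_sup_right K)) hMK_index

/-- If a Sylow `p`-subgroup `P` of the finite group `G` is nc-supplemented in `G` and
`N ⊴ G`, then `PN/N` is nc-supplemented in `G/N`. -/
theorem sylow_isNCSupplementedIn_quotient
    {G : Type*} [Group G] [Finite G] (p : ℕ) [Fact p.Prime] (P : Sylow p G)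
    (h : IsNCSupplementedIn (P : Subgroup G)) (N : Subgroup G) [N.Normal] :
    IsNCSupplementedIn ((P : Subgroup G).map (QuotientGroup.mk' N)) := by
  obtain ⟨K, L, hLnormal, hL, hPK⟩ := h
  have hsurj := QuotientGroup.mk'_surjective N
  refine ⟨K.map (QuotientGroup.mk' N), L.map (QuotientGroup.mk' N), hLnormal.map _ hsurj, ?_, ?_⟩
  · rw [Subgroup.coe_map, Subgroup.coe_map, Subgroup.coe_map, hL, Set.image_mul]
  · apply Subgroup.map_inf_map_le_normalCore_map hsurj
    rw [QuotientGroup.ker_mk']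
    exact P.inf_sup_le_normalCore_sup hL hPK N
end

section
/- Let φ be an injective group homomorphism from the cyclic group Z₅ of order 5 into the automorphism group Aut(Z₁₉ × Z₁₉), and let G = (Z₁₉ × Z₁₉) ⋊_φ Z₅ be the corresponding semidirect product. Then gcd(|G|, 19−1) = 1, 19³ does not divide |G|, and G is not 19-nilpotent, i.e., G has no normal subgroup of order coprime to 19 whose index is a power of 19. -/
/-!
A normal `19`-complement `K` of `G = N ⋊ Z₅`, `N = Z₁₉ × Z₁₉`, has order prime to `|N| = 19²`, so
it meets the normal subgroup `N` trivially, and disjoint normal subgroups commute. Since `N` is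
abelian, an element `k ∈ K` commuting with `N` has `φ(k.right) = 1`, hence `k.right = 1` by
injectivity of `φ`, i.e. `k ∈ N`. So `K = 1`, and its index `|G| = 19² · 5` is not a power of `19`.
-/

namespace SemidirectProduct

variable {N G : Type*} [Group G]

theorem card_range_inl [Group N] {φ : G →* MulAut N} :
    Nat.card (inl : N →* N ⋊[φ] G).range = Nat.card N :=
  Nat.card_congr (MonoidHom.ofInjective inl_injective).toEquiv.symm

variable [CommGroup N] {φ : G →* MulAut N}

theorem commute_inl_iff (n : N) (k : N ⋊[φ] G) : Commute (inl n) k ↔ φ k.right n = n := by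
  rw [commute_iff_eq, SemidirectProduct.ext_iff]
  simp only [mul_left, mul_right, left_inl, right_inl, map_one, MulAut.one_apply, one_mul,
    mul_one, and_true, mul_comm n, mul_right_inj, eq_comm]

theorem eq_bot_of_normal_of_disjoint_range_inl (hφ : Function.Injective φ)
    {K : Subgroup (N ⋊[φ] G)} (hK : K.Normal) (hdisj : Disjoint K (inl : N →* N ⋊[φ] G).range) :
    K = ⊥ := by
  have hN : (inl : N →* N ⋊[φ] G).range.Normal := by
    rw [range_inl_eq_ker_rightHom]
    infer_instance
  refine hdisj.eq_bot_of_le fun k hk => ?_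
  have hfix : φ k.right = 1 := MulEquiv.ext fun n =>
    (commute_inl_iff n k).mp
      (Subgroup.commute_of_normal_of_disjoint _ _ hN hK hdisj.symm _ _ ⟨n, rfl⟩ hk)
  have hright : k.right = 1 := hφ (hfix.trans (map_one φ).symm)
  rw [range_inl_eq_ker_rightHom]
  exact hright

end SemidirectProduct

open SemidirectProduct in
/-- Let `φ` be an injective homomorphism from `Z₅` into `Aut(Z₁₉ × Z₁₉)` and let
`G = (Z₁₉ × Z₁₉) ⋊[φ] Z₅`.  Then `gcd(|G|, 19 - 1) = 1`, `19³ ∤ |G|`, and `G` is not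
`19`-nilpotent. -/
theorem example_not_19_nilpotent
    (φ : Multiplicative (ZMod 5) →* MulAut (Multiplicative (ZMod 19 × ZMod 19)))
    (hφ : Function.Injective φ) :
    Nat.gcd (Nat.card (Multiplicative (ZMod 19 × ZMod 19) ⋊[φ] Multiplicative (ZMod 5)))
        (19 - 1) = 1 ∧
    ¬ 19 ^ 3 ∣ Nat.card (Multiplicative (ZMod 19 × ZMod 19) ⋊[φ] Multiplicative (ZMod 5)) ∧
    ¬ ∃ K : Subgroup (Multiplicative (ZMod 19 × ZMod 19) ⋊[φ] Multiplicative (ZMod 5)),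
        K.Normal ∧ Nat.Coprime (Nat.card K) 19 ∧ ∃ n : ℕ, K.index = 19 ^ n := by
  have hN : Nat.card (Multiplicative (ZMod 19 × ZMod 19)) = 19 ^ 2 := by
    simp [Nat.card_eq_fintype_card]
  have hcard : Nat.card (Multiplicative (ZMod 19 × ZMod 19) ⋊[φ] Multiplicative (ZMod 5))
      = 19 ^ 2 * 5 := by
    rw [SemidirectProduct.card, hN, Nat.card_eq_fintype_card]
    rfl
  refine ⟨by rw [hcard]; norm_num, by rw [hcard]; norm_num, ?_⟩
  rintro ⟨K, hK, hcop, n, hidx⟩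
  have hdisj : Disjoint K (inl : _ →* Multiplicative (ZMod 19 × ZMod 19) ⋊[φ] _).range :=
    Subgroup.disjoint_of_coprime_natCard (by rw [card_range_inl, hN]; exact hcop.pow_right 2)
  rw [eq_bot_of_normal_of_disjoint_range_inl hφ hK hdisj, Subgroup.index_bot, hcard] at hidx
  have h5 : 5 ∣ 19 := Nat.prime_five.dvd_of_dvd_pow (hidx ▸ dvd_mul_left 5 _)
  norm_num at h5
end
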